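/- arXiv:cs/0611046 — 8 statements merged into one kernel-verified Lean document; each statement's English description precedes it below -/
import Mathlib

section
/- Small Model Theorem for rational logic R: if a finite set Γ of formulas (boolean combinations of propositional formulas and conditional assertions A |~ B) is satisfiable in a rational model, then it is satisfiable in a rational model with at most n worlds, where n is the size of Γ (the number of conditional subformula occurrences in Γ plus one suffices). -/
/-- Propositional formulas over atoms `α`. -/
inductive PForm (α : Type) : Type
  | atom : α → PForm α
  | neg : PForm α → PForm α
  | conj : PForm α → PForm α → PForm α
  | disj : PForm α → PForm α → PForm α

/-- Truth of a propositional formula at a world, given a valuation. -/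
def PForm.sat {α W : Type} (V : W → α → Prop) : W → PForm α → Prop
  | w, .atom a => V w a
  | w, .neg A => ¬ PForm.sat V w A
  | w, .conj A B => PForm.sat V w A ∧ PForm.sat V w B
  | w, .disj A B => PForm.sat V w A ∨ PForm.sat V w B

/-- `minW lt S w` : `w` is a `lt`-minimal world satisfying `S`. -/
def minW {W : Type} (lt : W → W → Prop) (S : W → Prop) (w : W) : Prop :=
  S w ∧ ∀ w', lt w' w → ¬ S w'

/-- The language of KLM logic R: boolean combinations of propositional formulas
and conditional assertions `A |~ B`. -/
inductive CForm (α : Type) : Type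
  | prop : PForm α → CForm α
  | cond : PForm α → PForm α → CForm α
  | neg : CForm α → CForm α
  | conj : CForm α → CForm α → CForm α
  | disj : CForm α → CForm α → CForm α

/-- A rational model: `<` irreflexive, transitive, modular, smooth. -/
structure RatModel (α : Type) where
  W : Type
  lt : W → W → Prop
  V : W → α → Prop
  nonempty : Nonempty W
  irrefl : Irreflexive lt
  trans : Transitive lt
  modular : ∀ w w₁ w₂, lt w₁ w₂ → lt w₁ w ∨ lt w w₂
  smooth : ∀ (A : PForm α) (w : W), PForm.sat V w A →
      minW lt (fun v => PForm.sat V v A) w ∨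
        ∃ w', minW lt (fun v => PForm.sat V v A) w' ∧ lt w' w

/-- Truth of a formula of the language at a world of a rational model. -/
def csat {α : Type} (M : RatModel α) : M.W → CForm α → Prop
  | w, .prop A => PForm.sat M.V w A
  | _, .cond A B => ∀ v, minW M.lt (fun u => PForm.sat M.V u A) v → PForm.sat M.V v B
  | w, .neg F => ¬ csat M w F
  | w, .conj F G => csat M w F ∧ csat M w G
  | w, .disj F G => csat M w F ∨ csat M w G

/-- Number of conditional subformula occurrences. -/
def condCount {α : Type} : CForm α → ℕ
  | .prop _ => 0
  | .cond _ _ => 1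
  | .neg F => condCount F
  | .conj F G => condCount F + condCount G
  | .disj F G => condCount F + condCount G

/-!
Restrict a model of `Γ` at `w` to `w` together with one world per conditional occurrence
`A |~ B` of `Γ`: a minimal `A`-world, chosen to falsify `B` whenever some minimal `A`-world
does. A finite strict order is smooth, so this is again a rational model. Falsified
conditionals keep their counterexample. For a valid one, a world of the submodel that is
minimal there among `A`-worlds but not in the whole model lies above some minimal `A`-world,
hence, by modularity, above the chosen one, which is impossible.
-/

theorem PForm.sat_comp {α W W' : Type} (V : W → α → Prop) (f : W' → W) (x : W')
    (A : PForm α) : PForm.sat (fun y => V (f y)) x A ↔ PForm.sat V (f x) A := by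
  induction A <;> simp only [PForm.sat, *]

theorem minW_or_exists_minW_lt {W : Type} [Finite W] {lt : W → W → Prop}
    (hirr : ∀ x, ¬ lt x x) (htr : ∀ x y z, lt x y → lt y z → lt x z) {P : W → Prop} {w : W}
    (hw : P w) : minW lt P w ∨ ∃ w', minW lt P w' ∧ lt w' w := by
  have : IsTrans W lt := ⟨htr⟩
  have : Std.Irrefl lt := ⟨hirr⟩
  obtain ⟨m, ⟨hPm, hmw⟩, hmin⟩ := (Finite.wellFounded_of_trans_of_irrefl lt).has_min
    {x | P x ∧ (lt x w ∨ x = w)} ⟨w, hw, Or.inr rfl⟩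
  have hm : minW lt P m := by
    refine ⟨hPm, fun x hxm hPx => hmin x ⟨hPx, Or.inl ?_⟩ hxm⟩
    rcases hmw with hmw | rfl
    exacts [htr _ _ _ hxm hmw, hxm]
  rcases hmw with hmw | rfl
  exacts [Or.inr ⟨m, hm, hmw⟩, Or.inl hm]

def condsOf {α : Type} : CForm α → List (PForm α × PForm α)
  | .prop _ => []
  | .cond A B => [(A, B)]
  | .neg F => condsOf F
  | .conj F G => condsOf F ++ condsOf G
  | .disj F G => condsOf F ++ condsOf G

theorem length_condsOf {α : Type} (F : CForm α) : (condsOf F).length = condCount F := by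
  induction F <;> simp [condsOf, condCount, *]

namespace RatModel

variable {α : Type} (M : RatModel α)

def restrict (S : Set M.W) [Finite S] (hS : S.Nonempty) : RatModel α where
  W := S
  lt x y := M.lt x y
  V x := M.V x
  nonempty := hS.to_subtype
  irrefl x := M.irrefl x
  trans _ _ _ hxy hyz := M.trans hxy hyz
  modular x y z := M.modular x y z
  smooth _ _ hw := minW_or_exists_minW_lt (lt := fun x y : S => M.lt x y) (fun x => M.irrefl x)
    (fun _ _ _ hxy hyz => M.trans hxy hyz) hw

def WitnessedIn (S : Set M.W) (A B : PForm α) : Prop :=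
  ((∃ v, minW M.lt (PForm.sat M.V · A) v) → ∃ u ∈ S, minW M.lt (PForm.sat M.V · A) u) ∧
    ((∃ v, minW M.lt (PForm.sat M.V · A) v ∧ ¬ PForm.sat M.V v B) →
      ∃ u ∈ S, minW M.lt (PForm.sat M.V · A) u ∧ ¬ PForm.sat M.V u B)

variable {M}

theorem WitnessedIn.mono {S T : Set M.W} {A B : PForm α} (h : M.WitnessedIn S A B)
    (hST : S ⊆ T) : M.WitnessedIn T A B :=
  ⟨fun hex => (h.1 hex).imp fun _ hu => ⟨hST hu.1, hu.2⟩,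
    fun hex => (h.2 hex).imp fun _ hu => ⟨hST hu.1, hu.2⟩⟩

variable (M)

theorem exists_witnessedIn_singleton (A B : PForm α) : ∃ u, M.WitnessedIn {u} A B := by
  by_cases hneg : ∃ v, minW M.lt (PForm.sat M.V · A) v ∧ ¬ PForm.sat M.V v B
  · obtain ⟨u, hu⟩ := hneg
    exact ⟨u, fun _ => ⟨u, rfl, hu.1⟩, fun _ => ⟨u, rfl, hu⟩⟩
  by_cases hmin : ∃ v, minW M.lt (PForm.sat M.V · A) v
  · obtain ⟨u, hu⟩ := hmin
    exact ⟨u, fun _ => ⟨u, rfl, hu⟩, fun h => absurd h hneg⟩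
  · obtain ⟨u⟩ := M.nonempty
    exact ⟨u, fun h => absurd h hmin, fun h => absurd h hneg⟩

variable {S : Set M.W} [Finite S] (hS : S.Nonempty)

theorem sat_restrict (v : S) (A : PForm α) :
    PForm.sat (M.restrict S hS).V v A ↔ PForm.sat M.V v A :=
  PForm.sat_comp M.V Subtype.val v A

theorem minW_restrict_iff (A : PForm α) (v : S) :
    minW (M.restrict S hS).lt (PForm.sat (M.restrict S hS).V · A) v ↔
      PForm.sat M.V v A ∧ ∀ u ∈ S, M.lt u v → ¬ PForm.sat M.V u A := by
  show (_ ∧ ∀ u : S, M.lt u v → ¬ PForm.sat (M.restrict S hS).V u A) ↔ _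
  simp only [sat_restrict, Subtype.forall]

theorem csat_restrict_cond_iff {A B : PForm α} (hAB : M.WitnessedIn S A B) (v : S) :
    csat (M.restrict S hS) v (.cond A B) ↔ csat M v (.cond A B) := by
  constructor
  · intro h u hu
    by_contra hB
    obtain ⟨u', hu'S, hu'A, hu'B⟩ := hAB.2 ⟨u, hu, hB⟩
    refine hu'B ((M.sat_restrict hS ⟨u', hu'S⟩ B).1 (h ⟨u', hu'S⟩ ?_))
    exact (M.minW_restrict_iff hS A _).2 ⟨hu'A.1, fun x _ hx => hu'A.2 x hx⟩
  · rintro h ⟨u, huS⟩ hu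
    obtain ⟨huA, hu⟩ := (M.minW_restrict_iff hS A ⟨u, huS⟩).1 hu
    refine (M.sat_restrict hS ⟨u, huS⟩ B).2 ?_
    rcases M.smooth A u huA with hmin | ⟨m, hm, hmu⟩
    · exact h u hmin
    obtain ⟨u', hu'S, hu'⟩ := hAB.1 ⟨m, hm⟩
    have hu'u : M.lt u' u :=
      (M.modular u' m u hmu).resolve_left fun hmu' => hu'.2 m hmu' hm.1
    exact absurd hu'.1 (hu u' hu'S hu'u)

theorem csat_restrict_iff (F : CForm α) (hF : ∀ p ∈ condsOf F, M.WitnessedIn S p.1 p.2)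
    (v : S) : csat (M.restrict S hS) v F ↔ csat M v F := by
  induction F with
  | prop A => exact M.sat_restrict hS v A
  | cond A B => exact M.csat_restrict_cond_iff hS (hF (A, B) (List.mem_singleton_self _)) v
  | neg F ih => exact not_congr (ih hF)
  | conj F G ihF ihG =>
    simp only [condsOf, List.mem_append] at hF
    exact and_congr (ihF fun p hp => hF p (Or.inl hp)) (ihG fun p hp => hF p (Or.inr hp))
  | disj F G ihF ihG =>
    simp only [condsOf, List.mem_append] at hF
    exact or_congr (ihF fun p hp => hF p (Or.inl hp)) (ihG fun p hp => hF p (Or.inr hp))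

end RatModel

/-- Small Model Theorem for R: a finite satisfiable set Γ is
satisfiable in a rational model with at most (number of conditional
occurrences in Γ) + 1 worlds. -/
theorem small_model_theorem {α : Type} (Γ : List (CForm α))
    (hsat : ∃ (M : RatModel α) (w : M.W), ∀ F ∈ Γ, csat M w F) :
    ∃ M : RatModel α, Finite M.W ∧
      Nat.card M.W ≤ 1 + (Γ.map condCount).sum ∧
      ∃ w : M.W, ∀ F ∈ Γ, csat M w F := by
  classical
  obtain ⟨M, w, hw⟩ := hsat
  choose wit hwit using fun p : PForm α × PForm α => M.exists_witnessedIn_singleton p.1 p.2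
  let S : Finset M.W := (w :: (Γ.flatMap condsOf).map wit).toFinset
  have hwS : w ∈ S := by simp [S]
  refine ⟨M.restrict S ⟨w, hwS⟩, inferInstanceAs (Finite (S : Set M.W)), ?_, ⟨w, hwS⟩,
    fun F hF => (M.csat_restrict_iff _ F (fun p hp => (hwit p).mono ?_) _).2 (hw F hF)⟩
  · calc Nat.card (S : Set M.W) = S.card := by rw [Nat.card_coe_set_eq, Set.ncard_coe_finset]
      _ ≤ (w :: (Γ.flatMap condsOf).map wit).length := List.toFinset_card_le _
      _ = 1 + (Γ.map condCount).sum := by simp [List.length_flatMap, length_condsOf, add_comm]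
  · simp only [Set.singleton_subset_iff, Finset.mem_coe, S, List.mem_toFinset]
    exact List.mem_cons_of_mem _ (List.mem_map_of_mem (List.mem_flatMap_of_mem hF hp))
end

section
/- Every boolean combination of conditional formulas satisfiable in a loop-cumulative model is satisfiable in a CL-preferential model (constructed by replacing each state s with pairs (s,w) for w ∈ l(s), with R relating pairs sharing the same state and <' induced by < on states). -/
/-- Truth of a propositional formula at a state: true in all its worlds. -/
def stateSat {α S W : Type} (l : S → Set W) (V : W → α → Prop)
    (s : S) (A : PForm α) : Prop :=
  ∀ w ∈ l s, PForm.sat V w A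

/-- A loop-cumulative model. -/
structure LCModel (α : Type) where
  S : Type
  W : Type
  l : S → Set W
  lt : S → S → Prop
  V : W → α → Prop
  l_ne : ∀ s, (l s).Nonempty
  irrefl : Irreflexive lt
  trans : Transitive lt
  smooth : ∀ (A : PForm α) (s : S), stateSat l V s A →
      minW lt (fun s' => stateSat l V s' A) s ∨
        ∃ s', minW lt (fun s'' => stateSat l V s'' A) s' ∧ lt s' s

/-- `LA` holds at `w`: `A` holds at all `R`-successors of `w`. -/
def Lsat {α W : Type} (R : W → W → Prop) (V : W → α → Prop)
    (w : W) (A : PForm α) : Prop :=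
  ∀ w', R w w' → PForm.sat V w' A

/-- Boolean combinations of conditional assertions. -/
inductive CondComb (α : Type) : Type
  | cond : PForm α → PForm α → CondComb α
  | neg : CondComb α → CondComb α
  | conj : CondComb α → CondComb α → CondComb α
  | disj : CondComb α → CondComb α → CondComb α

/-- Truth of a boolean combination of conditionals at a state of a
loop-cumulative model. -/
def lcsat {α : Type} (M : LCModel α) : M.S → CondComb α → Prop
  | _, .cond A B => ∀ s', minW M.lt (fun u => stateSat M.l M.V u A) s' →
      stateSat M.l M.V s' B
  | s, .neg F => ¬ lcsat M s F
  | s, .conj F G => lcsat M s F ∧ lcsat M s G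
  | s, .disj F G => lcsat M s F ∨ lcsat M s G

/-- A CL-preferential model. -/
structure CLPModel (α : Type) where
  W : Type
  R : W → W → Prop
  lt : W → W → Prop
  V : W → α → Prop
  serial : ∀ w, ∃ w', R w w'
  irrefl : Irreflexive lt
  trans : Transitive lt
  smoothL : ∀ (A : PForm α) (w : W), Lsat R V w A →
      minW lt (fun v => Lsat R V v A) w ∨
        ∃ w', minW lt (fun v => Lsat R V v A) w' ∧ lt w' w

/-- Truth of a boolean combination of conditionals at a world of a
CL-preferential model. -/
def clpsat {α : Type} (M : CLPModel α) : M.W → CondComb α → Prop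
  | _, .cond A B => ∀ w', minW M.lt (fun v => Lsat M.R M.V v A) w' →
      Lsat M.R M.V w' B
  | w, .neg F => ¬ clpsat M w F
  | w, .conj F G => clpsat M w F ∧ clpsat M w G
  | w, .disj F G => clpsat M w F ∨ clpsat M w G

theorem sat_map {α W W' : Type} (f : W' → W) (V : W → α → Prop) (A : PForm α) :
    ∀ w : W', PForm.sat (fun p a => V (f p) a) w A ↔ PForm.sat V (f w) A := by
  induction A with
  | atom a => intro w; rfl
  | neg A ih => intro w; simp [PForm.sat, ih]
  | conj A B ihA ihB => intro w; simp [PForm.sat, ihA, ihB]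
  | disj A B ihA ihB => intro w; simp [PForm.sat, ihA, ihB]

/-- every boolean combination of conditionals satisfiable in a
loop-cumulative model is satisfiable in a CL-preferential model. -/
theorem lc_to_clp {α : Type} (F : CondComb α)
    (hsat : ∃ (M : LCModel α) (s : M.S), lcsat M s F) :
    ∃ (M' : CLPModel α) (w : M'.W), clpsat M' w F := by
  obtain ⟨M, s0, hF⟩ := hsat
  let W' : Type := {p : M.S × M.W // p.2 ∈ M.l p.1}
  let R : W' → W' → Prop := fun p q => p.1.1 = q.1.1
  let lt' : W' → W' → Prop := fun p q => M.lt p.1.1 q.1.1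
  let V' : W' → α → Prop := fun p a => M.V p.1.2 a
  have keyL : ∀ (p : W') (A : PForm α),
      Lsat R V' p A ↔ stateSat M.l M.V p.1.1 A := by
    intro p A
    constructor
    · intro h w hw
      have := h ⟨(p.1.1, w), hw⟩ rfl
      exact (sat_map (fun q : W' => q.1.2) M.V A _).mp this
    · intro h q hq
      have := h q.1.2 (hq ▸ q.2)
      exact (sat_map (fun q : W' => q.1.2) M.V A q).mpr this
  have keyMin : ∀ (p : W') (A : PForm α),
      minW lt' (fun q => Lsat R V' q A) p ↔
        minW M.lt (fun u => stateSat M.l M.V u A) p.1.1 := by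
    intro p A
    constructor
    · rintro ⟨h1, h2⟩
      refine ⟨(keyL p A).mp h1, ?_⟩
      intro s' hs' hsat'
      obtain ⟨w', hw'⟩ := M.l_ne s'
      exact h2 ⟨(s', w'), hw'⟩ hs' ((keyL ⟨(s', w'), hw'⟩ A).mpr hsat')
    · rintro ⟨h1, h2⟩
      refine ⟨(keyL p A).mpr h1, ?_⟩
      intro q hq hLq
      exact h2 q.1.1 hq ((keyL q A).mp hLq)
  let M' : CLPModel α :=
    { W := W', R := R, lt := lt', V := V'
      serial := fun p => ⟨p, rfl⟩
      irrefl := fun p h => M.irrefl p.1.1 h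
      trans := fun _ _ _ h1 h2 => M.trans h1 h2
      smoothL := by
        intro A p hp
        have hs : stateSat M.l M.V p.1.1 A := (keyL p A).mp hp
        rcases M.smooth A p.1.1 hs with hmin | ⟨s', hmin, hlt⟩
        · exact Or.inl ((keyMin p A).mpr hmin)
        · obtain ⟨w', hw'⟩ := M.l_ne s'
          exact Or.inr ⟨⟨(s', w'), hw'⟩, (keyMin ⟨(s', w'), hw'⟩ A).mpr hmin, hlt⟩ }
  have keyC : ∀ (G : CondComb α) (p : W'), clpsat M' p G ↔ lcsat M p.1.1 G := by
    intro G
    induction G with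
    | cond A B =>
      intro p
      constructor
      · intro h s' hmin
        obtain ⟨w', hw'⟩ := M.l_ne s'
        have := h ⟨(s', w'), hw'⟩ ((keyMin ⟨(s', w'), hw'⟩ A).mpr hmin)
        exact (keyL ⟨(s', w'), hw'⟩ B).mp this
      · intro h q hmin
        exact (keyL q B).mpr (h q.1.1 ((keyMin q A).mp hmin))
    | neg G ih => intro p; simp [clpsat, lcsat, ih p]
    | conj G H ihG ihH => intro p; simp [clpsat, lcsat, ihG p, ihH p]
    | disj G H ihG ihH => intro p; simp [clpsat, lcsat, ihG p, ihH p]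
  obtain ⟨w0, hw0⟩ := M.l_ne s0
  exact ⟨M', ⟨(s0, w0), hw0⟩, (keyC F ⟨(s0, w0), hw0⟩).mpr hF⟩
end

section
/- In the CL-preferential model M' constructed from a loop-cumulative model M by taking W' = {(s,w) : w ∈ l(s)}, R relating pairs with the same state, <' induced by <, and V'(s,w)=V(w): for every propositional formula A, M, s ⊫ A if and only if M', (s,w) ⊨ LA, for every w ∈ l(s). -/
/-- The worlds of the CL-preferential model constructed from a loop-cumulative
model: pairs `(s, w)` with `w ∈ l(s)`. -/
def Wc {α : Type} (M : LCModel α) : Type := {p : M.S × M.W // p.2 ∈ M.l p.1}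

/-- The accessibility relation of the constructed model: pairs sharing the
same state. -/
def Rc {α : Type} (M : LCModel α) : Wc M → Wc M → Prop := fun p q => p.1.1 = q.1.1

/-- The valuation of the constructed model. -/
def Vc {α : Type} (M : LCModel α) : Wc M → α → Prop := fun p => M.V p.1.2

theorem sat_Vc {α : Type} (M : LCModel α) (p : Wc M) (A : PForm α) :
    PForm.sat (Vc M) p A ↔ PForm.sat M.V p.1.2 A :=
  PForm.sat_comp M.V (fun q : Wc M => q.1.2) p A

/-- for every propositional `A`, `M, s ⊫ A` iff `LA` holds at
`(s, w)` in the constructed model, for every `w ∈ l(s)`. -/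
theorem stateSat_iff_Lsat {α : Type} (M : LCModel α) (A : PForm α)
    (s : M.S) (w : M.W) (hw : w ∈ M.l s) :
    stateSat M.l M.V s A ↔ Lsat (Rc M) (Vc M) ⟨(s, w), hw⟩ A := by
  constructor
  · rintro h ⟨⟨s', w'⟩, hw'⟩ (rfl : s = s')
    exact (sat_Vc M _ A).2 (h w' hw')
  · intro h w' hw'
    exact (sat_Vc M _ A).1 (h ⟨(s, w'), hw'⟩ rfl)
end

section
/- The LOOP axiom is semantically valid in all preferential models: if A₀ |~ A₁, A₁ |~ A₂, ..., A_{n-1} |~ Aₙ, and Aₙ |~ A₀ all hold in a preferential model M, then A₀ |~ Aₙ holds in M. -/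
/-- A preferential model: `<` irreflexive, transitive, smooth. -/
structure PrefModel (α : Type) where
  W : Type
  lt : W → W → Prop
  V : W → α → Prop
  nonempty : Nonempty W
  irrefl : Irreflexive lt
  trans : Transitive lt
  smooth : ∀ (A : PForm α) (w : W), PForm.sat V w A →
      minW lt (fun v => PForm.sat V v A) w ∨
        ∃ w', minW lt (fun v => PForm.sat V v A) w' ∧ lt w' w

/-- The conditional `A |~ B` holds in `M`: every `<`-minimal `A`-world
satisfies `B`. -/
def condHolds {α : Type} (M : PrefModel α) (A B : PForm α) : Prop :=
  ∀ w, minW M.lt (fun v => PForm.sat M.V v A) w → PForm.sat M.V w B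

/-- LOOP: if `A₀ |~ A₁`, ..., `A_{n-1} |~ Aₙ` and `Aₙ |~ A₀`
hold in a preferential model `M`, then `A₀ |~ Aₙ` holds in `M`. -/
theorem loop_valid {α : Type} (M : PrefModel α) (n : ℕ) (A : ℕ → PForm α)
    (hchain : ∀ i < n, condHolds M (A i) (A (i + 1)))
    (hlast : condHolds M (A n) (A 0)) :
    condHolds M (A 0) (A n) := by
  intro w hw
  have key : ∀ i ≤ n, ∃ v, minW M.lt (fun u => PForm.sat M.V u (A i)) v ∧
      (v = w ∨ M.lt v w) := by
    intro i hi
    induction i with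
    | zero => exact ⟨w, hw, Or.inl rfl⟩
    | succ k ih =>
      obtain ⟨v, hv, hle⟩ := ih (Nat.le_of_succ_le hi)
      have hsat : PForm.sat M.V v (A (k + 1)) :=
        hchain k (Nat.lt_of_succ_le hi) v hv
      rcases M.smooth (A (k + 1)) v hsat with hmin | ⟨v', hv', hlt⟩
      · exact ⟨v, hmin, hle⟩
      · refine ⟨v', hv', Or.inr ?_⟩
        rcases hle with rfl | h
        · exact hlt
        · exact M.trans hlt h
  obtain ⟨v, hv, hle⟩ := key n le_rfl
  have hA0 : PForm.sat M.V v (A 0) := hlast v hv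
  rcases hle with rfl | h
  · exact hv.1
  · exact absurd hA0 (hw.2 v h)
end

section
/- The CUT rule is semantically valid in all preferential models: if A |~ B and (A ∧ B) |~ C hold in a preferential model M, then A |~ C holds in M. -/
/-- CUT: if `A |~ B` and `A ∧ B |~ C` hold in a preferential
model `M`, then `A |~ C` holds in `M`. -/
theorem cut_valid {α : Type} (M : PrefModel α) (A B C : PForm α)
    (h1 : condHolds M A B) (h2 : condHolds M (PForm.conj A B) C) :
    condHolds M A C := by
  intro w hw
  exact h2 w ⟨⟨hw.1, h1 w hw⟩, fun w' hlt hs => hw.2 w' hlt hs.1⟩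
end

section
/- Cautious Monotonicity (CM) is semantically valid in all preferential models: if A |~ B and A |~ C hold in a preferential model M, then (A ∧ B) |~ C holds in M. -/
/-- Cautious Monotonicity: if `A |~ B` and `A |~ C` hold in a
preferential model `M`, then `A ∧ B |~ C` holds in `M`. -/
theorem cm_valid {α : Type} (M : PrefModel α) (A B C : PForm α)
    (h1 : condHolds M A B) (h2 : condHolds M A C) :
    condHolds M (PForm.conj A B) C := by
  intro w hw
  obtain ⟨⟨hA, hB⟩, hmin⟩ := hw
  rcases M.smooth A w hA with hminA | ⟨w', hw', hlt⟩
  · exact h2 w hminA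
  · exact absurd ⟨hw'.1, h1 w' hw'⟩ (hmin w' hlt)
end

section
/- In a multi-linear preferential model M satisfying a set Γ containing negated box formulas ¬□¬A₁, ..., ¬□¬Aₙ at a world x, there exist witnesses z₁, ..., zₙ < x with zᵢ ∈ Min_<(Aᵢ), and taking z_k to be a maximum among the zᵢ with respect to <, for every i ≠ k either M, z_k ⊨ Aᵢ or M, z_k ⊨ ¬□¬Aᵢ. -/
lemma exists_max_aux {W : Type} (lt : W → W → Prop) (htrans : Transitive lt) :
    ∀ (n : ℕ), 0 < n → ∀ (z : Fin n → W),
      (∀ i j, z i = z j ∨ lt (z i) (z j) ∨ lt (z j) (z i)) →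
      ∃ k, ∀ i, z i = z k ∨ lt (z i) (z k) := by
  intro n
  induction n with
  | zero => intro h; omega
  | succ m ih =>
    intro _ z hcmp
    rcases Nat.eq_zero_or_pos m with hm | hm
    · subst hm
      refine ⟨0, fun i => ?_⟩
      left; congr 1; omega
    · obtain ⟨k, hk⟩ := ih hm (fun i => z i.castSucc) (fun i j => hcmp _ _)
      rcases hcmp (Fin.last m) k.castSucc with heq | hlt | hgt
      · refine ⟨k.castSucc, fun i => ?_⟩
        refine Fin.lastCases ?_ (fun j => ?_) i
        · left; exact heq
        · exact hk j
      · refine ⟨k.castSucc, fun i => ?_⟩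
        refine Fin.lastCases ?_ (fun j => ?_) i
        · right; exact hlt
        · exact hk j
      · refine ⟨Fin.last m, fun i => ?_⟩
        refine Fin.lastCases ?_ (fun j => ?_) i
        · left; rfl
        · rcases hk j with heq | hlt'
          · right; rw [heq]; exact hgt
          · right; exact htrans hlt' hgt

/-- in a multi-linear preferential model satisfying strong
smoothness, with `¬□¬A₁, ..., ¬□¬Aₙ` true at `x`, there are witnesses
`zᵢ < x` with `zᵢ ∈ Min_<(Aᵢ)`, and for a `<`-maximum `z_k` among them, every
`i ≠ k` satisfies `z_k ⊨ Aᵢ` or `z_k ⊨ ¬□¬Aᵢ`. -/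
theorem multilinear_witnesses {α W : Type} [Finite W]
    (lt : W → W → Prop) (V : W → α → Prop)
    (hirr : Irreflexive lt) (htrans : Transitive lt)
    (hml : ∃ (I : Type) (c : W → I),
      (∀ w w', c w = c w' → w ≠ w' → lt w w' ∨ lt w' w) ∧
      (∀ w w', c w ≠ c w' → ¬ lt w w' ∧ ¬ lt w' w))
    (hss : ∀ (A : PForm α) (w : W), (∃ w', lt w' w ∧ PForm.sat V w' A) →
        ∃ w'', minW lt (fun v => PForm.sat V v A) w'' ∧ lt w'' w)
    (x : W) (n : ℕ) (hn : 0 < n) (A : Fin n → PForm α)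
    (hneg : ∀ i, ∃ w', lt w' x ∧ PForm.sat V w' (A i)) :
    ∃ z : Fin n → W,
      (∀ i, lt (z i) x ∧ minW lt (fun v => PForm.sat V v (A i)) (z i)) ∧
      ∃ k : Fin n, (∀ i, z i = z k ∨ lt (z i) (z k)) ∧
        ∀ i, i ≠ k →
          (PForm.sat V (z k) (A i) ∨ ∃ w', lt w' (z k) ∧ PForm.sat V w' (A i)) := by
  have h := fun i => hss (A i) x (hneg i)
  choose z hmin hltx using h
  obtain ⟨I, c, hsame, hdiff⟩ := hml
  have hcomp : ∀ i : Fin n, c (z i) = c x := by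
    intro i
    by_contra hc
    exact (hdiff _ _ hc).1 (hltx i)
  have hcmp : ∀ i j, z i = z j ∨ lt (z i) (z j) ∨ lt (z j) (z i) := by
    intro i j
    by_cases he : z i = z j
    · exact Or.inl he
    · exact Or.inr (hsame _ _ ((hcomp i).trans (hcomp j).symm) he)
  obtain ⟨k, hk⟩ := exists_max_aux lt htrans n hn z hcmp
  refine ⟨z, fun i => ⟨hltx i, hmin i⟩, k, hk, fun i hi => ?_⟩
  rcases hk i with heq | hlt
  · left; rw [← heq]; exact (hmin i).1
  · right; exact ⟨z i, hlt, (hmin i).1⟩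
end

section
/- The set of formulas {¬(C |~ B), C |~ A, A |~ B, B |~ C} is unsatisfiable in any preferential model satisfying the strong smoothness condition (equivalently, in any model where < has no infinite descending chains), but it is satisfiable in a cumulative model satisfying only the smoothness condition. -/
/-- The conditional `A |~ B` holds in the preferential model given by
`lt` and `V`. -/
def condH {α W : Type} (lt : W → W → Prop) (V : W → α → Prop)
    (A B : PForm α) : Prop :=
  ∀ w, minW lt (fun v => PForm.sat V v A) w → PForm.sat V w B

/-- A cumulative model: `<` on states is merely irreflexive (not necessarily
transitive), satisfying the (weak) smoothness condition. -/
structure CumModel (α : Type) where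
  S : Type
  W : Type
  l : S → Set W
  lt : S → S → Prop
  V : W → α → Prop
  l_ne : ∀ s, (l s).Nonempty
  irrefl : Irreflexive lt
  smooth : ∀ (A : PForm α) (s : S), stateSat l V s A →
      minW lt (fun s' => stateSat l V s' A) s ∨
        ∃ s', minW lt (fun s'' => stateSat l V s'' A) s' ∧ lt s' s

/-- The conditional `A |~ B` holds in a cumulative model. -/
def condC {α : Type} (M : CumModel α) (A B : PForm α) : Prop :=
  ∀ s, minW M.lt (fun s' => stateSat M.l M.V s' A) s → stateSat M.l M.V s B

-- auxiliary defs to insert above the theorem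

/-- Worlds for the cumulative countermodel: world 0 sats {a,c}, 1 sats {a,b}, 2 sats {b,c}. -/
def cmV {α : Type} (a b c : α) : Fin 3 → α → Prop
  | 0, x => x = a ∨ x = c
  | 1, x => x = a ∨ x = b
  | 2, x => x = b ∨ x = c

/-- Labels: state 0 ↦ all worlds; states 1,2,3 ↦ singletons. -/
def cmL : Fin 4 → Set (Fin 3)
  | 0 => Set.univ
  | 1 => {0}
  | 2 => {1}
  | 3 => {2}

/-- The cyclic order: 0 below everything; 2<1, 3<2, 1<3. -/
def cmLT (s t : Fin 4) : Prop :=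
  (s = 0 ∧ t ≠ 0) ∨ (s = 2 ∧ t = 1) ∨ (s = 3 ∧ t = 2) ∨ (s = 1 ∧ t = 3)

set_option maxHeartbeats 1000000

/-- `{¬(C |~ B), C |~ A, A |~ B, B |~ C}` is unsatisfiable in
preferential models with strong smoothness, but satisfiable in a cumulative
model with only the weak smoothness condition. -/
theorem loop_set_unsat_pref_sat_cum {α : Type} (a b c : α)
    (hab : a ≠ b) (hbc : b ≠ c) (hac : a ≠ c) :
    (∀ (W : Type) (lt : W → W → Prop) (V : W → α → Prop),
        Irreflexive lt → Transitive lt →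
        (∀ (X : PForm α) (w : W), (∃ w', lt w' w ∧ PForm.sat V w' X) →
            ∃ w'', minW lt (fun v => PForm.sat V v X) w'' ∧ lt w'' w) →
        condH lt V (PForm.atom c) (PForm.atom a) →
        condH lt V (PForm.atom a) (PForm.atom b) →
        condH lt V (PForm.atom b) (PForm.atom c) →
        condH lt V (PForm.atom c) (PForm.atom b)) ∧
    (∃ M : CumModel α,
        condC M (PForm.atom c) (PForm.atom a) ∧
        condC M (PForm.atom a) (PForm.atom b) ∧
        condC M (PForm.atom b) (PForm.atom c) ∧
        ¬ condC M (PForm.atom c) (PForm.atom b)) := by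
  constructor
  · -- Preferential part: Loop is derivable with transitivity + strong smoothness
    intro W lt V hirr htrans hsm hca hab' hbc'
    intro w hw
    have hwc : PForm.sat V w (PForm.atom c) := hw.1
    by_cases hmin : ∀ w', lt w' w → ¬ PForm.sat V w' (PForm.atom a)
    · exact hab' w ⟨hca w hw, hmin⟩
    · push_neg at hmin
      obtain ⟨w', hw'lt, hw'a⟩ := hmin
      obtain ⟨w1, hw1min, hw1lt⟩ := hsm (PForm.atom a) w ⟨w', hw'lt, hw'a⟩
      have hw1b : PForm.sat V w1 (PForm.atom b) := hab' w1 hw1min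
      by_cases hmin2 : ∀ w'', lt w'' w1 → ¬ PForm.sat V w'' (PForm.atom b)
      · have hw1c : PForm.sat V w1 (PForm.atom c) := hbc' w1 ⟨hw1b, hmin2⟩
        exact absurd hw1c (hw.2 w1 hw1lt)
      · push_neg at hmin2
        obtain ⟨w'', hw''lt, hw''b⟩ := hmin2
        obtain ⟨w2, hw2min, hw2lt⟩ := hsm (PForm.atom b) w1 ⟨w'', hw''lt, hw''b⟩
        have hw2c : PForm.sat V w2 (PForm.atom c) := hbc' w2 hw2min
        exact absurd hw2c (hw.2 w2 (htrans hw2lt hw1lt))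
  · -- Cumulative countermodel
    -- characterization of stateSat
    have hchar1 : ∀ (A : PForm α), stateSat cmL (cmV a b c) 1 A ↔ PForm.sat (cmV a b c) 0 A := by
      intro A; simp [stateSat, cmL]
    have hchar2 : ∀ (A : PForm α), stateSat cmL (cmV a b c) 2 A ↔ PForm.sat (cmV a b c) 1 A := by
      intro A; simp [stateSat, cmL]
    have hchar3 : ∀ (A : PForm α), stateSat cmL (cmV a b c) 3 A ↔ PForm.sat (cmV a b c) 2 A := by
      intro A; simp [stateSat, cmL]
    have hchar0 : ∀ (A : PForm α), stateSat cmL (cmV a b c) 0 A ↔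
        (PForm.sat (cmV a b c) 0 A ∧ PForm.sat (cmV a b c) 1 A ∧ PForm.sat (cmV a b c) 2 A) := by
      intro A
      constructor
      · intro h
        exact ⟨h 0 trivial, h 1 trivial, h 2 trivial⟩
      · rintro ⟨h0, h1, h2⟩ w _
        fin_cases w <;> assumption
    have hnc1 : ¬ PForm.sat (cmV a b c) 1 (PForm.atom c) := by
      rintro (h | h)
      exacts [hac h.symm, hbc h.symm]
    have hna2 : ¬ PForm.sat (cmV a b c) 2 (PForm.atom a) := by
      rintro (h | h)
      exacts [hab h, hac h]
    have hnb0 : ¬ PForm.sat (cmV a b c) 0 (PForm.atom b) := by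
      rintro (h | h)
      exacts [hab h.symm, hbc h]
    have hnone0 : ∀ s : Fin 4, ¬ cmLT s 0 := by
      rintro s (⟨_, h⟩ | ⟨_, h⟩ | ⟨_, h⟩ | ⟨_, h⟩)
      · exact h rfl
      all_goals simp at h
    have hsmooth : ∀ (A : PForm α) (s : Fin 4), stateSat cmL (cmV a b c) s A →
        minW cmLT (fun s' => stateSat cmL (cmV a b c) s' A) s ∨
          ∃ s', minW cmLT (fun s'' => stateSat cmL (cmV a b c) s'' A) s' ∧ cmLT s' s := by
      intro A s hs
      set p0 := PForm.sat (cmV a b c) 0 A with hp0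
      set p1 := PForm.sat (cmV a b c) 1 A with hp1
      set p2 := PForm.sat (cmV a b c) 2 A with hp2
      have hmin0 : (p0 ∧ p1 ∧ p2) → minW cmLT (fun s' => stateSat cmL (cmV a b c) s' A) 0 := by
        intro h
        exact ⟨(hchar0 A).2 h, fun s' hlt _ => hnone0 s' hlt⟩
      fin_cases s
      · exact Or.inl (hmin0 ((hchar0 A).1 hs))
      · -- s = 1, hs : p0
        have hp : p0 := (hchar1 A).1 hs
        by_cases h12 : p1 ∧ p2
        · exact Or.inr ⟨0, hmin0 ⟨hp, h12⟩, Or.inl ⟨rfl, by decide⟩⟩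
        · by_cases hq1 : p1
          · -- p2 false; state 2 is minimal, 2 < 1
            have hnp2 : ¬ p2 := fun h => h12 ⟨hq1, h⟩
            refine Or.inr ⟨2, ⟨(hchar2 A).2 hq1, ?_⟩, Or.inr (Or.inl ⟨rfl, rfl⟩)⟩
            intro s' hlt hsat
            rcases hlt with ⟨h1', _⟩ | ⟨_, h2'⟩ | ⟨h1', _⟩ | ⟨_, h2'⟩
            · subst h1'; exact h12 ((hchar0 A).1 hsat).2
            · simp at h2'
            · subst h1'; exact hnp2 ((hchar3 A).1 hsat)
            · simp at h2'
          · -- p1 false; state 1 itself minimal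
            refine Or.inl ⟨hs, ?_⟩
            intro s' hlt hsat
            rcases hlt with ⟨h1', _⟩ | ⟨h1', _⟩ | ⟨_, h2'⟩ | ⟨_, h2'⟩
            · subst h1'; exact h12 ((hchar0 A).1 hsat).2
            · subst h1'; exact hq1 ((hchar2 A).1 hsat)
            · simp at h2'
            · simp at h2'
      · -- s = 2, hs : p1
        have hp : p1 := (hchar2 A).1 hs
        by_cases h02 : p0 ∧ p2
        · exact Or.inr ⟨0, hmin0 ⟨h02.1, hp, h02.2⟩, Or.inl ⟨rfl, by decide⟩⟩
        · by_cases hq2 : p2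
          · have hnp0 : ¬ p0 := fun h => h02 ⟨h, hq2⟩
            refine Or.inr ⟨3, ⟨(hchar3 A).2 hq2, ?_⟩, Or.inr (Or.inr (Or.inl ⟨rfl, rfl⟩))⟩
            intro s' hlt hsat
            rcases hlt with ⟨h1', _⟩ | ⟨_, h2'⟩ | ⟨_, h2'⟩ | ⟨h1', _⟩
            · subst h1'; exact hnp0 ((hchar0 A).1 hsat).1
            · simp at h2'
            · simp at h2'
            · subst h1'; exact hnp0 ((hchar1 A).1 hsat)
          · refine Or.inl ⟨hs, ?_⟩
            intro s' hlt hsat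
            rcases hlt with ⟨h1', _⟩ | ⟨_, h2'⟩ | ⟨h1', _⟩ | ⟨_, h2'⟩
            · subst h1'; exact hq2 ((hchar0 A).1 hsat).2.2
            · simp at h2'
            · subst h1'; exact hq2 ((hchar3 A).1 hsat)
            · simp at h2'
      · -- s = 3, hs : p2
        have hp : p2 := (hchar3 A).1 hs
        by_cases h01 : p0 ∧ p1
        · exact Or.inr ⟨0, hmin0 ⟨h01.1, h01.2, hp⟩, Or.inl ⟨rfl, by decide⟩⟩
        · by_cases hq0 : p0
          · have hnp1 : ¬ p1 := fun h => h01 ⟨hq0, h⟩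
            refine Or.inr ⟨1, ⟨(hchar1 A).2 hq0, ?_⟩, Or.inr (Or.inr (Or.inr ⟨rfl, rfl⟩))⟩
            intro s' hlt hsat
            rcases hlt with ⟨h1', _⟩ | ⟨h1', _⟩ | ⟨_, h2'⟩ | ⟨_, h2'⟩
            · subst h1'; exact hnp1 ((hchar0 A).1 hsat).2.1
            · subst h1'; exact hnp1 ((hchar2 A).1 hsat)
            · simp at h2'
            · simp at h2'
          · refine Or.inl ⟨hs, ?_⟩
            intro s' hlt hsat
            rcases hlt with ⟨h1', _⟩ | ⟨_, h2'⟩ | ⟨_, h2'⟩ | ⟨h1', _⟩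
            · subst h1'; exact hq0 ((hchar0 A).1 hsat).1
            · simp at h2'
            · simp at h2'
            · subst h1'; exact hq0 ((hchar1 A).1 hsat)
    refine ⟨⟨Fin 4, Fin 3, cmL, cmLT, cmV a b c, ?_, ?_, hsmooth⟩, ?_, ?_, ?_, ?_⟩
    · intro s; fin_cases s
      · exact ⟨0, trivial⟩
      · exact ⟨0, rfl⟩
      · exact ⟨1, rfl⟩
      · exact ⟨2, rfl⟩
    · intro s; fin_cases s <;> simp [cmLT]
    · -- C |~ A
      intro s hmin
      fin_cases s
      · exact absurd ((hchar0 _).1 hmin.1).2.1 hnc1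
      · exact (hchar1 (PForm.atom a)).2 (Or.inl rfl)
      · exact absurd ((hchar2 _).1 hmin.1) hnc1
      · exact absurd ((hchar1 (PForm.atom c)).2 (Or.inr rfl))
          (hmin.2 1 (Or.inr (Or.inr (Or.inr ⟨rfl, rfl⟩))))
    · -- A |~ B
      intro s hmin
      fin_cases s
      · exact absurd ((hchar0 _).1 hmin.1).2.2 hna2
      · exact absurd ((hchar2 (PForm.atom a)).2 (Or.inl rfl))
          (hmin.2 2 (Or.inr (Or.inl ⟨rfl, rfl⟩)))
      · exact (hchar2 (PForm.atom b)).2 (Or.inr rfl)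
      · exact absurd ((hchar3 _).1 hmin.1) hna2
    · -- B |~ C
      intro s hmin
      fin_cases s
      · exact absurd ((hchar0 _).1 hmin.1).1 hnb0
      · exact absurd ((hchar1 _).1 hmin.1) hnb0
      · exact absurd ((hchar3 (PForm.atom b)).2 (Or.inl rfl))
          (hmin.2 3 (Or.inr (Or.inr (Or.inl ⟨rfl, rfl⟩))))
      · exact (hchar3 (PForm.atom c)).2 (Or.inr rfl)
    · -- ¬ (C |~ B)
      intro h
      have hmin1 : minW cmLT (fun s' => stateSat cmL (cmV a b c) s' (PForm.atom c)) 1 := by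
        refine ⟨(hchar1 (PForm.atom c)).2 (Or.inr rfl), ?_⟩
        intro s' hlt hsat
        rcases hlt with ⟨h1', _⟩ | ⟨h1', _⟩ | ⟨_, h2'⟩ | ⟨_, h2'⟩
        · subst h1'; exact hnc1 ((hchar0 _).1 hsat).2.1
        · subst h1'; exact hnc1 ((hchar2 _).1 hsat)
        · simp at h2'
        · simp at h2'
      exact hnb0 ((hchar1 _).1 (h 1 hmin1))
end
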